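/- Let β > 1. If w = w₁⋯wₙ is a full admissible word, then for every 1 ≤ k < n the suffix σ^k(w) = w_{k+1}⋯wₙ is also full. -/

import Mathlib

noncomputable def Tb (β x : ℝ) : ℝ := β * x - ⌊β * x⌋

/-- The (i+1)-th digit of the β-expansion of x (0-indexed). -/
noncomputable def dig (β x : ℝ) (i : ℕ) : ℕ := (⌊β * (Tb β)^[i] x⌋).toNat

/-- w is an admissible word for base β. -/
def Adm (β : ℝ) (w : List ℕ) : Prop :=
  ∃ x, x ∈ Set.Ico (0:ℝ) 1 ∧ ∀ i (h : i < w.length), w[i] = dig β x i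

/-- u is an admissible digit sequence for base β. -/
def AdmSeq (β : ℝ) (u : ℕ → ℕ) : Prop :=
  ∃ x, x ∈ Set.Ico (0:ℝ) 1 ∧ ∀ i, u i = dig β x i

/-- The cylinder I(w) ⊆ [0,1). -/
def cyl (β : ℝ) (w : List ℕ) : Set ℝ :=
  {x | x ∈ Set.Ico (0:ℝ) 1 ∧ ∀ i (h : i < w.length), w[i] = dig β x i}

/-- w is a full word: T_β^{|w|} maps I(w) onto [0,1). -/
def Full (β : ℝ) (w : List ℕ) : Prop :=
  (Tb β)^[w.length] '' cyl β w = Set.Ico 0 1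

/-- The β-expansion of 1 is finite with length M. -/
def FiniteLen (β : ℝ) (M : ℕ) : Prop :=
  0 < M ∧ dig β 1 (M-1) ≠ 0 ∧ ∀ j, M ≤ j → dig β 1 j = 0

open Classical in
/-- The (i+1)-th digit of the modified β-expansion ε*(1,β) (0-indexed). -/
noncomputable def modExp (β : ℝ) (i : ℕ) : ℕ :=
  if h : ∃ M, FiniteLen β M then
    (if (i+1) % (Nat.find h) = 0 then dig β 1 (Nat.find h - 1) - 1
     else dig β 1 (i % Nat.find h))
  else dig β 1 i

/-- View a finite word as the sequence w0^∞. -/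
def wordSeq (w : List ℕ) (i : ℕ) : ℕ := w.getD i 0

/-- Strict lexicographic order on sequences. -/
def seqLt (u v : ℕ → ℕ) : Prop := ∃ k, (∀ i, i < k → u i = v i) ∧ u k < v k

/-- Strict lexicographic order on finite words (identified with w0^∞). -/
def wlt (u v : List ℕ) : Prop := seqLt (wordSeq u) (wordSeq v)

/-- Concatenation of a finite word with a sequence. -/
def catSeq (w : List ℕ) (u : ℕ → ℕ) (i : ℕ) : ℕ :=
  if h : i < w.length then w[i] else u (i - w.length)

open Classical in
/-- The largest position k ≤ s with ε_k ≠ 0 (greedy step). -/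
noncomputable def greedyStep (β : ℝ) (s : ℕ) : ℕ :=
  Nat.findGreatest (fun k => 1 ≤ k ∧ dig β 1 (k-1) ≠ 0) s

/-- τ_β(s): number of terms in the greedy representation of s by nonzero positions. -/
noncomputable def tau (β : ℝ) : ℕ → ℕ
  | 0 => 0
  | s + 1 => tau β (s - (greedyStep β (s+1) - 1)) + 1
decreasing_by omega

open Classical in
/-- r_s(β): maximal length of a string of 0's in ε₁*⋯ε_s*. -/
noncomputable def rrun (β : ℝ) (s : ℕ) : ℕ :=
  Nat.findGreatest (fun k => 1 ≤ k ∧ ∃ i, i + k ≤ s ∧ ∀ t, t < k → modExp β (i + t) = 0) s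

/-- v is the immediate successor of u in the lexicographic order on Σ_β^n. -/
def SuccIn (β : ℝ) (n : ℕ) (u v : List ℕ) : Prop :=
  u.length = n ∧ v.length = n ∧ Adm β u ∧ Adm β v ∧ wlt u v ∧
  ¬ ∃ z : List ℕ, z.length = n ∧ Adm β z ∧ wlt u z ∧ wlt z v

/-- There is a run of l consecutive non-full words in Σ_β^n. -/
def NonFullRun (β : ℝ) (n l : ℕ) : Prop :=
  ∃ f : ℕ → List ℕ,
    (∀ j, j < l → (f j).length = n ∧ Adm β (f j) ∧ ¬ Full β (f j)) ∧
    (∀ j, j + 1 < l → SuccIn β n (f j) (f (j+1)))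

/-- There is a maximal run of l consecutive non-full words in Σ_β^n. -/
def MaxNonFullRun (β : ℝ) (n l : ℕ) : Prop :=
  0 < l ∧ ∃ f : ℕ → List ℕ,
    (∀ j, j < l → (f j).length = n ∧ Adm β (f j) ∧ ¬ Full β (f j)) ∧
    (∀ j, j + 1 < l → SuccIn β n (f j) (f (j+1))) ∧
    (∀ u, SuccIn β n u (f 0) → Full β u) ∧
    (∀ u, SuccIn β n (f (l-1)) u → Full β u)

/-- There is a maximal run of l consecutive full words in Σ_β^n. -/
def MaxFullRun (β : ℝ) (n l : ℕ) : Prop :=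
  0 < l ∧ ∃ f : ℕ → List ℕ,
    (∀ j, j < l → (f j).length = n ∧ Adm β (f j) ∧ Full β (f j)) ∧
    (∀ j, j + 1 < l → SuccIn β n (f j) (f (j+1))) ∧
    (∀ u, SuccIn β n u (f 0) → ¬ Full β u) ∧
    (∀ u, SuccIn β n (f (l-1)) u → ¬ Full β u)

/-- The canonical decomposition of an admissible word, as in the structure theorem:
p.1 is the list of block lengths k₁,…,k_p and p.2 is the final length l. -/
def Decomp (β : ℝ) (w : List ℕ) (p : List ℕ × ℕ) : Prop :=
  1 ≤ p.2 ∧ (∀ k ∈ p.1, 1 ≤ k) ∧ p.1.sum + p.2 = w.length ∧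
  (∀ j, j < p.1.length →
    (∀ t, t < p.1.getD j 0 - 1 → w.getD ((p.1.take j).sum + t) 0 = dig β 1 t) ∧
    w.getD ((p.1.take j).sum + (p.1.getD j 0 - 1)) 0 < dig β 1 (p.1.getD j 0 - 1)) ∧
  (∀ t, t < p.2 - 1 → w.getD (p.1.sum + t) 0 = dig β 1 t) ∧
  w.getD (p.1.sum + (p.2 - 1)) 0 ≤ dig β 1 (p.2 - 1)

/-!
`T_β^k` maps the cylinder `I(w)` into the cylinder of the suffix `σ^k(w)`, because the
digits of `T_β^k x` are those of `x` shifted by `k`. Hence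
`[0,1) = T_β^n I(w) = T_β^{n-k} (T_β^k I(w)) ⊆ T_β^{n-k} I(σ^k w) ⊆ [0,1)`.
-/

lemma Tb_mem_Ico (β x : ℝ) : Tb β x ∈ Set.Ico (0 : ℝ) 1 :=
  ⟨Int.fract_nonneg (β * x), Int.fract_lt_one (β * x)⟩

lemma iterate_Tb_mem_Ico {β x : ℝ} (hx : x ∈ Set.Ico (0 : ℝ) 1) (m : ℕ) :
    (Tb β)^[m] x ∈ Set.Ico (0 : ℝ) 1 := by
  cases m with
  | zero => exact hx
  | succ m =>
    rw [Function.iterate_succ_apply']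
    exact Tb_mem_Ico β _

lemma dig_iterate_Tb (β x : ℝ) (k i : ℕ) : dig β ((Tb β)^[k] x) i = dig β x (i + k) := by
  rw [dig, dig, Function.iterate_add_apply]

lemma mapsTo_iterate_Tb_cyl_drop (β : ℝ) (w : List ℕ) (k : ℕ) :
    Set.MapsTo (Tb β)^[k] (cyl β w) (cyl β (w.drop k)) := by
  rintro x ⟨hx, hdig⟩
  refine ⟨iterate_Tb_mem_Ico hx k, fun i hi => ?_⟩
  rw [List.getElem_drop, dig_iterate_Tb, hdig (k + i), Nat.add_comm]

lemma iterate_Tb_image_cyl_subset (β : ℝ) (w : List ℕ) (m : ℕ) :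
    (Tb β)^[m] '' cyl β w ⊆ Set.Ico 0 1 := by
  rintro _ ⟨x, hx, rfl⟩
  exact iterate_Tb_mem_Ico hx.1 m

lemma full_nil (β : ℝ) : Full β [] := by
  simp [Full, cyl, Set.Ico]

lemma Full.drop {β : ℝ} {w : List ℕ} (hf : Full β w) {k : ℕ} (hk : k ≤ w.length) :
    Full β (w.drop k) := by
  refine (iterate_Tb_image_cyl_subset β _ _).antisymm ?_
  calc Set.Ico (0 : ℝ) 1
      = (Tb β)^[w.length - k] '' ((Tb β)^[k] '' cyl β w) := by
        rw [← Set.image_comp, ← Function.iterate_add, Nat.sub_add_cancel hk, hf]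
    _ ⊆ (Tb β)^[(w.drop k).length] '' cyl β (w.drop k) := by
        rw [List.length_drop]
        exact Set.image_mono (mapsTo_iterate_Tb_cyl_drop β w k).image_subset

theorem stmt3_general (β : ℝ) (w : List ℕ) (hf : Full β w) (k : ℕ) :
    Full β (w.drop k) := by
  rcases le_or_gt k w.length with hk | hk
  · exact hf.drop hk
  · rw [List.drop_eq_nil_of_le hk.le]
    exact full_nil β

/-- any proper suffix of a full word is full. -/
theorem stmt3 (β : ℝ) (hβ : 1 < β) (w : List ℕ) (h : Adm β w) (hf : Full β w)
    (k : ℕ) (hk1 : 1 ≤ k) (hk2 : k < w.length) :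
    Full β (w.drop k) :=
  stmt3_general β w hf k
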